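/- arXiv:1105.2531 — 3 statements merged into one kernel-verified Lean document; each statement's English description precedes it below -/
import Mathlib

section
/- Let φ(t) = c·exp(1/(|t|-1)) on [-1,1] with ∫φ = 1. For every C > 1, the ratio G(C,ε) := φ([1-Cε,1]) / φ([1-ε,1]) tends to +∞ as ε ↘ 0, where φ(A) := ∫_A φ. -/
open MeasureTheory Real Set Filter

/-- `φ(t) = c · exp(1/(|t|-1))` (with the convention `φ(±1) = 0`). -/
noncomputable def phi (c t : ℝ) : ℝ := if |t| = 1 then 0 else c * Real.exp (1 / (|t| - 1))

open Topology

/-! `φ` decreases on `[0, 1]` and `φ(1 - δ) = c·e^{-1/δ}`, so `φ([1-ε, 1]) ≤ ε·c·e^{-1/ε}`, while for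
`1 < B < C` the numerator is at least `φ([1-Cε, 1-Bε]) ≥ (C-B)ε·c·e^{-1/(Bε)}`. The ratio is therefore
at least `(C-B)·exp((1 - 1/B)/ε)`, which tends to `+∞` as `ε ↘ 0`. -/

section AntitoneIntegral

variable {f : ℝ → ℝ} {a b : ℝ}

theorem AntitoneOn.integral_le_sub_mul (hab : a ≤ b) (hf : AntitoneOn f (Icc a b)) :
    ∫ x in a..b, f x ≤ (b - a) * f a := by
  have hfi : IntervalIntegrable f volume a b :=
    AntitoneOn.intervalIntegrable (by rwa [uIcc_of_le hab])
  calc ∫ x in a..b, f x ≤ ∫ _ in a..b, f a :=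
        intervalIntegral.integral_mono_on hab hfi intervalIntegrable_const
          fun x hx => hf ⟨le_rfl, hab⟩ hx hx.1
    _ = (b - a) * f a := by rw [intervalIntegral.integral_const, smul_eq_mul]

theorem AntitoneOn.sub_mul_le_integral (hab : a ≤ b) (hf : AntitoneOn f (Icc a b)) :
    (b - a) * f b ≤ ∫ x in a..b, f x := by
  have hfi : IntervalIntegrable f volume a b :=
    AntitoneOn.intervalIntegrable (by rwa [uIcc_of_le hab])
  calc (b - a) * f b = ∫ _ in a..b, f b := by rw [intervalIntegral.integral_const, smul_eq_mul]
    _ ≤ ∫ x in a..b, f x :=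
        intervalIntegral.integral_mono_on hab intervalIntegrable_const hfi
          fun x hx => hf hx ⟨hab, le_rfl⟩ hx.2

end AntitoneIntegral

section Phi

variable {c : ℝ}

theorem phi_nonneg (hc : 0 ≤ c) (t : ℝ) : 0 ≤ phi c t := by
  unfold phi
  split_ifs <;> positivity

theorem phi_of_nonneg_of_lt_one (t : ℝ) (h0 : 0 ≤ t) (h1 : t < 1) :
    phi c t = c * exp (1 / (t - 1)) := by
  rw [phi, abs_of_nonneg h0, if_neg h1.ne]

theorem phi_one_sub {δ : ℝ} (hδ : 0 < δ) (hδ1 : δ ≤ 1) : phi c (1 - δ) = c * exp (-(1 / δ)) := by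
  rw [phi_of_nonneg_of_lt_one _ (by linarith) (by linarith)]
  congr 2
  rw [sub_sub_cancel_left, one_div_neg_eq_neg_one_div]

theorem phi_antitoneOn (hc : 0 ≤ c) : AntitoneOn (phi c) (Icc 0 1) := by
  intro s hs t ht hst
  rcases ht.2.eq_or_lt with rfl | ht1
  · simpa [phi] using phi_nonneg hc s
  rw [phi_of_nonneg_of_lt_one t ht.1 ht1, phi_of_nonneg_of_lt_one s hs.1 (hst.trans_lt ht1)]
  exact mul_le_mul_of_nonneg_left
    (exp_le_exp.2 (one_div_le_one_div_of_neg_of_le (by linarith) (by linarith))) hc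

theorem integral_phi_one_sub_le (hc : 0 ≤ c) {ε : ℝ} (hε : 0 < ε) (hε1 : ε ≤ 1) :
    ∫ t in (1 - ε)..1, phi c t ≤ ε * (c * exp (-(1 / ε))) := by
  have h := (phi_antitoneOn hc).mono (Icc_subset_Icc (by linarith) le_rfl)
    |>.integral_le_sub_mul (a := 1 - ε) (b := 1) (by linarith)
  rwa [phi_one_sub hε hε1, sub_sub_cancel] at h

theorem le_integral_phi_one_sub (hc : 0 ≤ c) {δ δ' : ℝ} (hδ : 0 < δ) (hδδ' : δ ≤ δ')
    (hδ' : δ' ≤ 1) :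
    (δ' - δ) * (c * exp (-(1 / δ))) ≤ ∫ t in (1 - δ')..1, phi c t := by
  have hanti : AntitoneOn (phi c) (Icc (1 - δ') 1) :=
    (phi_antitoneOn hc).mono (Icc_subset_Icc (by linarith) le_rfl)
  calc (δ' - δ) * (c * exp (-(1 / δ)))
      = ((1 - δ) - (1 - δ')) * phi c (1 - δ) := by rw [phi_one_sub hδ (hδδ'.trans hδ')]; ring
    _ ≤ ∫ t in (1 - δ')..(1 - δ), phi c t :=
        (hanti.mono (Icc_subset_Icc le_rfl (by linarith))).sub_mul_le_integral (by linarith)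
    _ ≤ ∫ t in (1 - δ')..1, phi c t :=
        intervalIntegral.integral_mono_interval le_rfl (by linarith) (by linarith)
          (Eventually.of_forall (phi_nonneg hc))
          (AntitoneOn.intervalIntegrable (by rwa [uIcc_of_le (by linarith : 1 - δ' ≤ 1)]))

theorem integral_phi_one_sub_pos (hc : 0 < c) {ε : ℝ} (hε : 0 < ε) (hε1 : ε ≤ 1) :
    0 < ∫ t in (1 - ε)..1, phi c t :=
  calc 0 < (ε - ε / 2) * (c * exp (-(1 / (ε / 2)))) := by
        have : 0 < ε - ε / 2 := by linarith
        positivity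
    _ ≤ _ := le_integral_phi_one_sub hc.le (by linarith) (by linarith) hε1

theorem mul_exp_le_integral_phi_ratio (hc : 0 < c) {B C ε : ℝ} (hB : 1 < B) (hBC : B < C)
    (hε : 0 < ε) (hCε : C * ε ≤ 1) :
    (C - B) * exp ((1 - 1 / B) / ε) ≤
      (∫ t in (1 - C * ε)..1, phi c t) / ∫ t in (1 - ε)..1, phi c t := by
  have hε1 : ε ≤ 1 := le_trans (by nlinarith) hCε
  have hden := integral_phi_one_sub_pos hc hε hε1
  have hnum := le_integral_phi_one_sub hc.le (δ := B * ε) (δ' := C * ε) (by positivity)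
    (by nlinarith) hCε
  have hexp : exp (-(1 / (B * ε))) = exp ((1 - 1 / B) / ε) * exp (-(1 / ε)) := by
    rw [← exp_add]
    congr 1
    field_simp
    ring
  calc (C - B) * exp ((1 - 1 / B) / ε)
      = (C * ε - B * ε) * (c * exp (-(1 / (B * ε)))) / (ε * (c * exp (-(1 / ε)))) := by
        rw [hexp]
        field_simp
    _ ≤ _ := div_le_div₀ ((mul_nonneg (by nlinarith) (by positivity)).trans hnum) hnum hden
        (integral_phi_one_sub_le hc.le hε hε1)

end Phi

theorem stmt1_general (c : ℝ) (hc : 0 < c) :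
    ∀ C : ℝ, 1 < C →
      Tendsto (fun ε : ℝ => (∫ t in (1 - C * ε)..1, phi c t) / (∫ t in (1 - ε)..1, phi c t))
        (nhdsWithin 0 (Set.Ioi 0)) atTop := by
  intro C hC
  obtain ⟨B, hB, hBC⟩ := exists_between hC
  have hgrowth : Tendsto (fun ε : ℝ => (C - B) * exp ((1 - 1 / B) / ε)) (𝓝[>] 0) atTop := by
    have hpos : 0 < 1 - 1 / B := by rw [sub_pos, div_lt_one (by linarith)]; exact hB
    simp only [div_eq_mul_inv (1 - 1 / B)]
    exact (tendsto_exp_atTop.comp (tendsto_inv_nhdsGT_zero.const_mul_atTop hpos)).const_mul_atTop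
      (sub_pos.2 hBC)
  refine tendsto_atTop_mono' _ ?_ hgrowth
  filter_upwards [Ioo_mem_nhdsGT (show (0 : ℝ) < 1 / C by positivity)] with ε ⟨hε, hεC⟩
  exact mul_exp_le_integral_phi_ratio hc hB hBC hε ((lt_div_iff₀' (by linarith)).1 hεC).le

theorem stmt1 (c : ℝ) (hc : 0 < c)
    (hnorm : ∫ t in (-1:ℝ)..1, phi c t = 1) :
    ∀ C : ℝ, 1 < C →
      Tendsto (fun ε : ℝ => (∫ t in (1 - C * ε)..1, phi c t) / (∫ t in (1 - ε)..1, phi c t))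
        (nhdsWithin 0 (Set.Ioi 0)) atTop :=
  stmt1_general c hc
end

section
/- Let μ be a locally finite Borel measure on ℝ and x ∈ ℝ. Suppose ν = lim_i μ(B(x,r_i))⁻¹·(T_{x,r_i})_♯ μ is a tangent measure of μ at x, and z ∈ ℝ satisfies: there exist c_z > 0 and δ_z > 0 such that for every 0 < δ < δ_z there are infinitely many i with c_z⁻¹·δ ≤ μ(B(x + r_i·z, δ·r_i))/μ(B(x, r_i)) ≤ c_z·δ. Then 1/(2c_z) ≤ liminf_{δ↘0} ν(B(z,δ))/(2δ) and limsup_{δ↘0} ν(B(z,δ))/(2δ) ≤ c_z; in particular 0 < Θ¹_*(ν,z) ≤ Θ^{*1}(ν,z) < ∞. -/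
open MeasureTheory Metric Set Filter Topology

/-!
The normalized mass `μ(B(x + r_i z, δ r_i)) / μ(B(x, r_i))` is exactly the mass of `B(z, δ)` under
the `i`-th blow-up. Testing the weak convergence against an Urysohn function squeezed between
`B(z, s)` and `B(z, t)`, `s < t`, turns the frequent bounds at radius `t` (resp. `s`) into
`ν(B(z, s)) ≤ c t` and `c⁻¹ s ≤ ν(B(z, t))`; letting `s` and `t` merge gives
`c⁻¹ δ ≤ ν(B(z, δ)) ≤ c δ` for all `δ < δ_z`.
-/

/-- Weak convergence of a sequence of (locally finite) Borel measures. -/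
def WeakLim {E : Type*} [TopologicalSpace E] [MeasurableSpace E]
    (μs : ℕ → Measure E) (ν : Measure E) : Prop :=
  ∀ f : C(E, ℝ), HasCompactSupport f →
    Tendsto (fun i => ∫ x, f x ∂(μs i)) atTop (nhds (∫ x, f x ∂ν))

theorem measureReal_le_integral_le_measureReal {E : Type*} [MeasurableSpace E]
    {m : Measure E} {f : E → ℝ} {A B : Set E} (hA : MeasurableSet A) (hB : MeasurableSet B)
    (hmB : m B ≠ ⊤) (hf : AEStronglyMeasurable f m)
    (hAf : A.indicator 1 ≤ f) (hfB : f ≤ B.indicator 1) :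
    m.real A ≤ ∫ y, f y ∂m ∧ ∫ y, f y ∂m ≤ m.real B := by
  have hBint : Integrable (B.indicator 1) m :=
    (integrable_indicator_iff hB).2 (integrableOn_const (C := (1 : ℝ)) hmB)
  have hind_nonneg : ∀ (S : Set E) y, 0 ≤ S.indicator (1 : E → ℝ) y := fun S y =>
    indicator_nonneg (fun _ _ => zero_le_one) y
  have hfint : Integrable f m := hBint.mono' hf <| ae_of_all _ fun y =>
    (Real.norm_of_nonneg ((hind_nonneg A y).trans (hAf y))).trans_le (hfB y)
  have hAint : Integrable (A.indicator 1) m :=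
    hfint.mono' (measurable_const.indicator hA).aestronglyMeasurable <| ae_of_all _ fun y =>
      (Real.norm_of_nonneg (hind_nonneg A y)).trans_le (hAf y)
  constructor
  · simpa only [integral_indicator_one hA] using integral_mono hAint hfint hAf
  · simpa only [integral_indicator_one hB] using integral_mono hfint hBint hfB

section ProperSpace

variable {E : Type*} [PseudoMetricSpace E] [ProperSpace E] [MeasurableSpace E]
  [OpensMeasurableSpace E]

theorem exists_integral_sandwich_closedBall (z : E) {s t : ℝ} (hst : s < t) :
    ∃ f : C(E, ℝ), HasCompactSupport f ∧ ∀ m : Measure E, m (closedBall z t) ≠ ⊤ →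
      m.real (closedBall z s) ≤ ∫ y, f y ∂m ∧ ∫ y, f y ∂m ≤ m.real (closedBall z t) := by
  obtain ⟨f, hf1, hf0, hfc, hf01⟩ :=
    exists_continuous_one_zero_of_isCompact (isCompact_closedBall z s)
      isOpen_ball.isClosed_compl
      (disjoint_compl_right_iff_subset.mpr (closedBall_subset_ball hst))
  refine ⟨f, hfc, fun m hm => measureReal_le_integral_le_measureReal measurableSet_closedBall
    measurableSet_closedBall hm f.continuous.aestronglyMeasurable (fun y => ?_) (fun y => ?_)⟩
  · by_cases hy : y ∈ closedBall z s
    · simp [indicator_of_mem hy, hf1 hy]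
    · simpa [indicator_of_notMem hy] using (hf01 y).1
  · by_cases hy : y ∈ closedBall z t
    · simpa [indicator_of_mem hy] using (hf01 y).2
    · have : y ∈ (ball z t)ᶜ := fun h => hy (ball_subset_closedBall h)
      simp [indicator_of_notMem hy, hf0 this]

variable {μs : ℕ → Measure E} {ν : Measure E} [IsLocallyFiniteMeasure ν] {z : E} {s t a : ℝ}

theorem WeakLim.measureReal_closedBall_le_of_frequently (hlim : WeakLim μs ν) (hst : s < t)
    (h : ∃ᶠ i in atTop, μs i (closedBall z t) ≠ ⊤ ∧ (μs i).real (closedBall z t) ≤ a) :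
    ν.real (closedBall z s) ≤ a := by
  obtain ⟨f, hfc, hf⟩ := exists_integral_sandwich_closedBall z hst
  refine (hf ν measure_closedBall_lt_top.ne).1.trans <|
    le_of_tendsto_of_frequently (hlim f hfc) (h.mono fun i hi => ?_)
  exact (hf (μs i) hi.1).2.trans hi.2

theorem WeakLim.le_measureReal_closedBall_of_frequently (hlim : WeakLim μs ν) (hst : s < t)
    (h : ∃ᶠ i in atTop, μs i (closedBall z t) ≠ ⊤ ∧ a ≤ (μs i).real (closedBall z s)) :
    a ≤ ν.real (closedBall z t) := by
  obtain ⟨f, hfc, hf⟩ := exists_integral_sandwich_closedBall z hst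
  refine (ge_of_tendsto_of_frequently (hlim f hfc) (h.mono fun i hi => ?_)).trans
    (hf ν measure_closedBall_lt_top.ne).2
  exact hi.2.trans (hf (μs i) hi.1).1

end ProperSpace

theorem ofReal_le_liminf_measure_closedBall_div {E : Type*} [PseudoMetricSpace E]
    [MeasurableSpace E] {ν : Measure E} {z : E} {δz k : ℝ} (hδz : 0 < δz)
    (h : ∀ δ, 0 < δ → δ < δz → k * (2 * δ) ≤ ν.real (closedBall z δ)) :
    ENNReal.ofReal k ≤
      liminf (fun δ : ℝ => ν (closedBall z δ) / ENNReal.ofReal (2 * δ)) (𝓝[>] 0) := by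
  refine le_liminf_of_le (by isBoundedDefault) ?_
  filter_upwards [Ioo_mem_nhdsGT hδz] with δ ⟨hδ, hδz'⟩
  refine (ENNReal.le_div_iff_mul_le (Or.inl (by simpa using hδ))
    (Or.inl ENNReal.ofReal_ne_top)).2 ?_
  rw [← ENNReal.ofReal_mul' (by positivity)]
  exact ENNReal.ofReal_le_of_le_toReal (h δ hδ hδz')

theorem limsup_measure_closedBall_div_le_ofReal {E : Type*} [PseudoMetricSpace E]
    [ProperSpace E] [MeasurableSpace E] {ν : Measure E} [IsLocallyFiniteMeasure ν] {z : E}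
    {δz k : ℝ} (hδz : 0 < δz)
    (h : ∀ δ, 0 < δ → δ < δz → ν.real (closedBall z δ) ≤ k * (2 * δ)) :
    limsup (fun δ : ℝ => ν (closedBall z δ) / ENNReal.ofReal (2 * δ)) (𝓝[>] 0) ≤
      ENNReal.ofReal k := by
  refine limsup_le_of_le (by isBoundedDefault) ?_
  filter_upwards [Ioo_mem_nhdsGT hδz] with δ ⟨hδ, hδz'⟩
  refine ENNReal.div_le_of_le_mul ?_
  rw [← ENNReal.ofReal_mul' (by positivity), ENNReal.le_ofReal_iff_toReal_le
    measure_closedBall_lt_top.ne (measureReal_nonneg.trans (h δ hδ hδz'))]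
  exact h δ hδ hδz'

/-- The normalized blow-up `μ(B(x,r))⁻¹ (T_{x,r})_♯ μ` of `μ` at `x` at scale `r`. -/
noncomputable def blowUp (μ : Measure ℝ) (x r : ℝ) : Measure ℝ :=
  (μ (closedBall x r))⁻¹ • Measure.map (fun y => (y - x) / r) μ

def FrequentlyLinearMass (μ : Measure ℝ) (x : ℝ) (r : ℕ → ℝ) (z c δz : ℝ) : Prop :=
  ∀ δ : ℝ, 0 < δ → δ < δz →
    ∃ᶠ i in atTop,
      c⁻¹ * δ ≤ (μ (closedBall (x + r i * z) (δ * r i))).toReal /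
          (μ (closedBall x (r i))).toReal ∧
        (μ (closedBall (x + r i * z) (δ * r i))).toReal /
          (μ (closedBall x (r i))).toReal ≤ c * δ

theorem preimage_div_sub_closedBall {x r : ℝ} (hr : 0 < r) (z ρ : ℝ) :
    (fun y => (y - x) / r) ⁻¹' closedBall z ρ = closedBall (x + r * z) (ρ * r) := by
  ext y
  simp only [mem_preimage, mem_closedBall, Real.dist_eq]
  rw [show (y - x) / r - z = (y - (x + r * z)) / r by field_simp; ring, abs_div,
    abs_of_pos hr, div_le_iff₀ hr]

theorem blowUp_closedBall (μ : Measure ℝ) {x r : ℝ} (hr : 0 < r) (z ρ : ℝ) :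
    blowUp μ x r (closedBall z ρ) =
      (μ (closedBall x r))⁻¹ * μ (closedBall (x + r * z) (ρ * r)) := by
  rw [blowUp, Measure.smul_apply, smul_eq_mul,
    Measure.map_apply (by fun_prop) measurableSet_closedBall,
    preimage_div_sub_closedBall hr]

namespace FrequentlyLinearMass

variable {μ ν : Measure ℝ} [IsLocallyFiniteMeasure μ] {x : ℝ} {r : ℕ → ℝ} {z c δz δ : ℝ}

theorem frequently_blowUp (h : FrequentlyLinearMass μ x r z c δz) (hr : ∀ i, 0 < r i)
    (hc : 0 < c) (hδ : 0 < δ) (hδz : δ < δz) :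
    ∃ᶠ i in atTop, (∀ ρ, blowUp μ x (r i) (closedBall z ρ) ≠ ⊤) ∧
      c⁻¹ * δ ≤ (blowUp μ x (r i)).real (closedBall z δ) ∧
        (blowUp μ x (r i)).real (closedBall z δ) ≤ c * δ := by
  refine (h δ hδ hδz).mono fun i ⟨hlow, hup⟩ => ?_
  have hball : μ (closedBall x (r i)) ≠ 0 := fun h0 => by
    rw [h0, ENNReal.toReal_zero, div_zero] at hlow
    exact (not_le.2 (by positivity)) hlow
  have hreal : (blowUp μ x (r i)).real (closedBall z δ) =
      (μ (closedBall (x + r i * z) (δ * r i))).toReal / (μ (closedBall x (r i))).toReal := by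
    rw [measureReal_def, blowUp_closedBall μ (hr i), ENNReal.toReal_mul, ENNReal.toReal_inv,
      div_eq_inv_mul]
  refine ⟨fun ρ => ?_, hreal ▸ hlow, hreal ▸ hup⟩
  rw [blowUp_closedBall μ (hr i)]
  exact ENNReal.mul_ne_top (ENNReal.inv_ne_top.2 hball) measure_closedBall_lt_top.ne

variable [IsLocallyFiniteMeasure ν]

theorem measureReal_closedBall_le (h : FrequentlyLinearMass μ x r z c δz) (hr : ∀ i, 0 < r i)
    (hc : 0 < c) (hlim : WeakLim (fun i => blowUp μ x (r i)) ν) (hδ : 0 < δ) (hδz : δ < δz) :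
    ν.real (closedBall z δ) ≤ c * δ := by
  have hcδ : Tendsto (c * ·) (𝓝[>] δ) (𝓝 (c * δ)) := (continuous_const_mul c).continuousWithinAt
  refine ge_of_tendsto hcδ ?_
  filter_upwards [Ioo_mem_nhdsGT hδz] with t ⟨hδt, htδz⟩
  exact hlim.measureReal_closedBall_le_of_frequently hδt <|
    (h.frequently_blowUp hr hc (hδ.trans hδt) htδz).mono fun i hi => ⟨hi.1 t, hi.2.2⟩

theorem le_measureReal_closedBall (h : FrequentlyLinearMass μ x r z c δz) (hr : ∀ i, 0 < r i)
    (hc : 0 < c) (hlim : WeakLim (fun i => blowUp μ x (r i)) ν) (hδ : 0 < δ) (hδz : δ < δz) :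
    c⁻¹ * δ ≤ ν.real (closedBall z δ) := by
  have hcδ : Tendsto (c⁻¹ * ·) (𝓝[<] δ) (𝓝 (c⁻¹ * δ)) :=
    (continuous_const_mul c⁻¹).continuousWithinAt
  refine le_of_tendsto hcδ ?_
  filter_upwards [Ioo_mem_nhdsLT hδ] with s ⟨hs, hsδ⟩
  exact hlim.le_measureReal_closedBall_of_frequently hsδ <|
    (h.frequently_blowUp hr hc hs (hsδ.trans hδz)).mono fun i hi => ⟨hi.1 δ, hi.2.1⟩

end FrequentlyLinearMass

theorem stmt7_general (μ ν : Measure ℝ) [IsLocallyFiniteMeasure μ] [IsLocallyFiniteMeasure ν]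
    (x : ℝ) (r : ℕ → ℝ) (hr : ∀ i, 0 < r i)
    (hlim : WeakLim (fun i => (μ (closedBall x (r i)))⁻¹ •
      Measure.map (fun y => (y - x) / r i) μ) ν)
    (z : ℝ) (cz δz : ℝ) (hcz : 0 < cz) (hδz : 0 < δz)
    (hcomp : ∀ δ : ℝ, 0 < δ → δ < δz →
      ∃ᶠ i in atTop,
        cz⁻¹ * δ ≤ (μ (closedBall (x + r i * z) (δ * r i))).toReal /
            (μ (closedBall x (r i))).toReal ∧
          (μ (closedBall (x + r i * z) (δ * r i))).toReal /
            (μ (closedBall x (r i))).toReal ≤ cz * δ) :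
    ENNReal.ofReal (1 / (2 * cz)) ≤
        Filter.liminf (fun δ : ℝ => ν (closedBall z δ) / ENNReal.ofReal (2 * δ))
          (nhdsWithin 0 (Set.Ioi 0)) ∧
      Filter.limsup (fun δ : ℝ => ν (closedBall z δ) / ENNReal.ofReal (2 * δ))
          (nhdsWithin 0 (Set.Ioi 0)) ≤ ENNReal.ofReal cz := by
  have hlin : FrequentlyLinearMass μ x r z cz δz := hcomp
  have hblow : WeakLim (fun i => blowUp μ x (r i)) ν := hlim
  constructor
  · refine ofReal_le_liminf_measure_closedBall_div hδz fun δ hδ hδz' => ?_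
    calc 1 / (2 * cz) * (2 * δ) = cz⁻¹ * δ := by field_simp
      _ ≤ ν.real (closedBall z δ) := hlin.le_measureReal_closedBall hr hcz hblow hδ hδz'
  · calc _ ≤ ENNReal.ofReal (cz / 2) :=
          limsup_measure_closedBall_div_le_ofReal hδz fun δ hδ hδz' =>
            (hlin.measureReal_closedBall_le hr hcz hblow hδ hδz').trans_eq (by ring)
      _ ≤ ENNReal.ofReal cz := ENNReal.ofReal_le_ofReal (by linarith)

theorem stmt7 (μ ν : Measure ℝ) [IsLocallyFiniteMeasure μ] [IsLocallyFiniteMeasure ν]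
    (hν : ν ≠ 0) (x : ℝ) (r : ℕ → ℝ) (hr : ∀ i, 0 < r i)
    (hr0 : Tendsto r atTop (nhds 0))
    (hlim : WeakLim (fun i => (μ (closedBall x (r i)))⁻¹ •
      Measure.map (fun y => (y - x) / r i) μ) ν)
    (z : ℝ) (cz δz : ℝ) (hcz : 0 < cz) (hδz : 0 < δz)
    (hcomp : ∀ δ : ℝ, 0 < δ → δ < δz →
      ∃ᶠ i in atTop,
        cz⁻¹ * δ ≤ (μ (closedBall (x + r i * z) (δ * r i))).toReal /
            (μ (closedBall x (r i))).toReal ∧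
          (μ (closedBall (x + r i * z) (δ * r i))).toReal /
            (μ (closedBall x (r i))).toReal ≤ cz * δ) :
    ENNReal.ofReal (1 / (2 * cz)) ≤
        Filter.liminf (fun δ : ℝ => ν (closedBall z δ) / ENNReal.ofReal (2 * δ))
          (nhdsWithin 0 (Set.Ioi 0)) ∧
      Filter.limsup (fun δ : ℝ => ν (closedBall z δ) / ENNReal.ofReal (2 * δ))
          (nhdsWithin 0 (Set.Ioi 0)) ≤ ENNReal.ofReal cz :=
  stmt7_general μ ν x r hr hlim z cz δz hcz hδz hcomp
end

section
/- Let μ be a finite Borel measure on ℝ, x ∈ supp μ, r_i ↘ 0, and ν a tangent measure of μ at x with μ(B(x,r_i))⁻¹·(T_{x,r_i})_♯ μ → ν weakly. If z ∈ (-1,1), 0 < 2δ < 1 - |z|, c > 0, and the pairs (B(x + r_i z, δ r_i), B(x,r_i)) and (B(x + r_i z, 2δ r_i), B(x,r_i)) are each (c, δ)- resp. (c, 2δ)-comparable for infinitely many i (meaning c⁻¹δ ≤ μ(B(x+r_i z, δ r_i))/μ(B(x,r_i)) ≤ cδ, and similarly with 2δ), then c⁻¹·δ ≤ ν(B(z,δ))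 ≤ ν(U(z,2δ)) ≤ 2c·δ. -/
/-!
Both bounds are instances of the portmanteau inequalities for the blow-ups
`μᵢ = μ(B(x,rᵢ))⁻¹ (T_{x,rᵢ})♯ μ`, which are finite because `x ∈ supp μ`. For compact `K ⊆ U`
open, a Urysohn function `f` with `𝟙_K ≤ f ≤ 𝟙_U` gives `μᵢ(K) ≤ ∫ f dμᵢ → ∫ f dν ≤ ν(U)` and
`ν(K) ≤ ∫ f dν ← ∫ f dμᵢ ≤ μᵢ(U)`; regularity of `ν` then lets `U` shrink to `K`, resp. `K` grow
to `U`. Since `T_{x,rᵢ}⁻¹ B(z,ρ) = B(x + rᵢ z, ρ rᵢ)`, `μᵢ(B(z,ρ))` is exactly the ratio in the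
comparability hypotheses.
-/

open MeasureTheory Metric Set Filter Topology

section BumpIntegral

variable {X : Type*} [MeasurableSpace X] {m : Measure X} {f : X → ℝ} {s : Set X}

lemma measureReal_le_integral_of_eqOn_one (hs : MeasurableSet s) (hf : Integrable f m)
    (hf0 : 0 ≤ f) (hfs : EqOn f 1 s) : m.real s ≤ ∫ y, f y ∂m :=
  calc m.real s = ∫ y in s, f y ∂m := by
        rw [setIntegral_congr_fun hs hfs, Pi.one_def, setIntegral_const, smul_eq_mul, mul_one]
    _ ≤ ∫ y, f y ∂m := setIntegral_le_integral hf (Eventually.of_forall hf0)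

lemma integral_le_measureReal_of_support_subset (hs : m s < ⊤) (hf0 : 0 ≤ f) (hf1 : f ≤ 1)
    (hfs : Function.support f ⊆ s) : ∫ y, f y ∂m ≤ m.real s :=
  calc ∫ y, f y ∂m = ∫ y in s, f y ∂m :=
        (setIntegral_eq_integral_of_forall_compl_eq_zero fun y hy =>
          Function.notMem_support.1 fun h => hy (hfs h)).symm
    _ ≤ ‖∫ y in s, f y ∂m‖ := Real.le_norm_self _
    _ ≤ 1 * m.real s := norm_setIntegral_le_of_norm_le_const hs fun y _ => by
        rw [Real.norm_of_nonneg (hf0 y)]; exact hf1 y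
    _ = m.real s := one_mul _

end BumpIntegral

namespace WeakLim

variable {X : Type*} [TopologicalSpace X] [T2Space X] [LocallyCompactSpace X]
  [MeasurableSpace X] [BorelSpace X] {μs : ℕ → Measure X} {ν : Measure X} {a : ℝ}

theorem ofReal_le_measure_of_frequently [∀ i, IsFiniteMeasureOnCompacts (μs i)]
    [IsFiniteMeasureOnCompacts ν] [ν.OuterRegular] (h : WeakLim μs ν) {K : Set X}
    (hK : IsCompact K) (hfreq : ∃ᶠ i in atTop, a ≤ (μs i).real K) :
    ENNReal.ofReal a ≤ ν K := by
  rw [K.measure_eq_iInf_isOpen]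
  refine le_iInf₂ fun U hKU => le_iInf fun hU => ?_
  obtain ⟨f, hfK, hfc, hfU, hf01⟩ := exists_continuousMap_one_of_isCompact_subset_isOpen hK hU hKU
  have hf0 : 0 ≤ ⇑f := fun y => (hf01 y).1
  have hf1 : ⇑f ≤ 1 := fun y => (hf01 y).2
  have hlower : a ≤ ∫ y, f y ∂ν := ge_of_tendsto_of_frequently (h f hfc) <| hfreq.mono fun i hi =>
    hi.trans <| measureReal_le_integral_of_eqOn_one hK.measurableSet
      (f.continuous.integrable_of_hasCompactSupport hfc) hf0 hfK
  have hupper : ∫ y, f y ∂ν ≤ ν.real (tsupport f) :=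
    integral_le_measureReal_of_support_subset hfc.measure_lt_top hf0 hf1 (subset_tsupport f)
  calc ENNReal.ofReal a ≤ ν (tsupport f) := by
        rw [← ofReal_measureReal hfc.measure_ne_top]
        exact ENNReal.ofReal_le_ofReal (hlower.trans hupper)
    _ ≤ ν U := measure_mono hfU

theorem measure_le_ofReal_of_frequently [∀ i, IsFiniteMeasure (μs i)] [ν.Regular]
    (h : WeakLim μs ν) {U : Set X} (hU : IsOpen U) (hfreq : ∃ᶠ i in atTop, (μs i).real U ≤ a) :
    ν U ≤ ENNReal.ofReal a := by
  rw [hU.measure_eq_iSup_isCompact]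
  refine iSup₂_le fun K hKU => iSup_le fun hK => ?_
  obtain ⟨f, hfK, hfc, hfU, hf01⟩ := exists_continuousMap_one_of_isCompact_subset_isOpen hK hU hKU
  have hf0 : 0 ≤ ⇑f := fun y => (hf01 y).1
  have hf1 : ⇑f ≤ 1 := fun y => (hf01 y).2
  have hupper : ∫ y, f y ∂ν ≤ a := le_of_tendsto_of_frequently (h f hfc) <| hfreq.mono fun i hi =>
    (integral_le_measureReal_of_support_subset (measure_lt_top _ _) hf0 hf1
      ((subset_tsupport f).trans hfU)).trans hi
  have hlower : ν.real K ≤ ∫ y, f y ∂ν := measureReal_le_integral_of_eqOn_one hK.measurableSet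
    (f.continuous.integrable_of_hasCompactSupport hfc) hf0 hfK
  rw [← ofReal_measureReal hK.measure_ne_top]
  exact ENNReal.ofReal_le_ofReal (hlower.trans hupper)

end WeakLim

lemma preimage_sub_div_closedBall (x : ℝ) {r : ℝ} (hr : 0 < r) (z ρ : ℝ) :
    (fun y => (y - x) / r) ⁻¹' closedBall z ρ = closedBall (x + r * z) (ρ * r) := by
  ext y
  have : (y - x) / r - z = (y - (x + r * z)) / r := by field_simp; ring
  simp only [mem_preimage, mem_closedBall, Real.dist_eq, this, abs_div, abs_of_pos hr,
    div_le_iff₀ hr]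

lemma blowup_measureReal_closedBall (μ : Measure ℝ) (x : ℝ) {r : ℝ} (hr : 0 < r) (z ρ : ℝ) :
    ((μ (closedBall x r))⁻¹ • μ.map (fun y => (y - x) / r)).real (closedBall z ρ) =
      μ.real (closedBall (x + r * z) (ρ * r)) / μ.real (closedBall x r) := by
  have hmeas : Measurable fun y : ℝ => (y - x) / r := by fun_prop
  rw [measureReal_def, Measure.smul_apply, Measure.map_apply hmeas measurableSet_closedBall,
    preimage_sub_div_closedBall x hr, smul_eq_mul, ENNReal.toReal_mul, ENNReal.toReal_inv,
    inv_mul_eq_div, measureReal_def, measureReal_def]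

theorem stmt17_general (μ ν : Measure ℝ) [IsFiniteMeasure μ] [IsLocallyFiniteMeasure ν]
    (x : ℝ) (hx : ∀ ρ : ℝ, 0 < ρ → 0 < μ (closedBall x ρ))  -- `x ∈ supp μ`
    (r : ℕ → ℝ) (hr : ∀ i, 0 < r i)
    (hlim : WeakLim (fun i => (μ (closedBall x (r i)))⁻¹ •
      Measure.map (fun y => (y - x) / r i) μ) ν)
    (z : ℝ) (δ : ℝ) (hδ : 0 < δ)
    (c : ℝ)
    (hcomp1 : ∃ᶠ i in atTop,
      c⁻¹ * δ ≤ (μ (closedBall (x + r i * z) (δ * r i))).toReal /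
          (μ (closedBall x (r i))).toReal ∧
        (μ (closedBall (x + r i * z) (δ * r i))).toReal /
          (μ (closedBall x (r i))).toReal ≤ c * δ)
    (hcomp2 : ∃ᶠ i in atTop,
      c⁻¹ * (2 * δ) ≤ (μ (closedBall (x + r i * z) (2 * δ * r i))).toReal /
          (μ (closedBall x (r i))).toReal ∧
        (μ (closedBall (x + r i * z) (2 * δ * r i))).toReal /
          (μ (closedBall x (r i))).toReal ≤ c * (2 * δ)) :
    ENNReal.ofReal (c⁻¹ * δ) ≤ ν (closedBall z δ) ∧
      ν (closedBall z δ) ≤ ν (ball z (2 * δ)) ∧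
      ν (ball z (2 * δ)) ≤ ENNReal.ofReal (2 * c * δ) := by
  have : ∀ i, IsFiniteMeasure ((μ (closedBall x (r i)))⁻¹ • μ.map fun y => (y - x) / r i) :=
    fun i => (μ.map _).smul_finite (ENNReal.inv_ne_top.2 (hx _ (hr i)).ne')
  have hblowup := fun i ρ => blowup_measureReal_closedBall μ x (hr i) z ρ
  refine ⟨hlim.ofReal_le_measure_of_frequently (isCompact_closedBall z δ) ?_,
    measure_mono (closedBall_subset_ball (by linarith)), ?_⟩
  · exact hcomp1.mono fun i hi => (hblowup i δ).trans_ge hi.1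
  · rw [show 2 * c * δ = c * (2 * δ) by ring]
    refine hlim.measure_le_ofReal_of_frequently isOpen_ball (hcomp2.mono fun i hi => ?_)
    exact (measureReal_mono ball_subset_closedBall).trans ((hblowup i (2 * δ)).trans_le hi.2)

theorem stmt17 (μ ν : Measure ℝ) [IsFiniteMeasure μ] [IsLocallyFiniteMeasure ν]
    (x : ℝ) (hx : ∀ ρ : ℝ, 0 < ρ → 0 < μ (closedBall x ρ))  -- `x ∈ supp μ`
    (r : ℕ → ℝ) (hr : ∀ i, 0 < r i) (hr0 : Tendsto r atTop (nhds 0))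
    (hlim : WeakLim (fun i => (μ (closedBall x (r i)))⁻¹ •
      Measure.map (fun y => (y - x) / r i) μ) ν)
    (z : ℝ) (hz : |z| < 1) (δ : ℝ) (hδ : 0 < δ) (hδz : 2 * δ < 1 - |z|)
    (c : ℝ) (hc : 0 < c)
    (hcomp1 : ∃ᶠ i in atTop,
      c⁻¹ * δ ≤ (μ (closedBall (x + r i * z) (δ * r i))).toReal /
          (μ (closedBall x (r i))).toReal ∧
        (μ (closedBall (x + r i * z) (δ * r i))).toReal /
          (μ (closedBall x (r i))).toReal ≤ c * δ)
    (hcomp2 : ∃ᶠ i in atTop,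
      c⁻¹ * (2 * δ) ≤ (μ (closedBall (x + r i * z) (2 * δ * r i))).toReal /
          (μ (closedBall x (r i))).toReal ∧
        (μ (closedBall (x + r i * z) (2 * δ * r i))).toReal /
          (μ (closedBall x (r i))).toReal ≤ c * (2 * δ)) :
    ENNReal.ofReal (c⁻¹ * δ) ≤ ν (closedBall z δ) ∧
      ν (closedBall z δ) ≤ ν (ball z (2 * δ)) ∧
      ν (ball z (2 * δ)) ≤ ENNReal.ofReal (2 * c * δ) :=
  stmt17_general μ ν x hx r hr hlim z δ hδ c hcomp1 hcomp2
end
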